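/- For all integers n and m, the integral (2/π)·∫₀^π sin(n x)·sin(m x)/sin²x dx equals 2·sgn(n)·sgn(m)·min(|n|,|m|) when n + m is even, and equals 0 when n + m is odd. -/

import Mathlib

open Real Set Finset

noncomputable def frakm (j k : ℤ) : ℝ :=
  (1 / 2 : ℝ) * (j.sign : ℝ) * (k.sign : ℝ) * ((min |j| |k| : ℤ) : ℝ)

noncomputable def Scoef (j k l m : ℤ) : ℝ :=
  if Even (j + k + l + m) then
    frakm (j + k - l) m + frakm (j - k + l) m + frakm (-j + k + l) m - frakm (j + k + l) m
  else 0

/-!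
Off the zeros of `sin`, `sin (n x) / sin x = Uₙ₋₁(cos x)`, so every integrand is a.e. equal to a
continuous function. Reduce to `n, m ≥ 0` via `sin (n x) = sgn n · sin (|n| x)`. For `b = a + 2d`, the
identity `sin (A + x) sin (B + x) - sin A sin B = sin (A + B + x) sin x` peels one unit off `a`, at the
cost of the Dirichlet-kernel integral `∫₀^π sin ((2k+1) x) / sin x = π`; so the integral is `a π`.
If `n + m` is odd, the integrand is odd under `x ↦ π - x`.
-/

open MeasureTheory Polynomial.Chebyshev

lemma ae_sin_ne_zero : ∀ᵐ x : ℝ, sin x ≠ 0 := by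
  have hzeros : {x : ℝ | sin x = 0} ⊆ range (fun n : ℤ => (n : ℝ) * π) :=
    fun _ hx => sin_eq_zero_iff.mp hx
  rw [ae_iff]
  simpa using measure_mono_null hzeros ((countable_range _).measure_zero _)

lemma integral_congr_of_sin_ne_zero {f g : ℝ → ℝ} {a b : ℝ}
    (h : ∀ x, sin x ≠ 0 → f x = g x) : ∫ x in a..b, f x = ∫ x in a..b, g x :=
  intervalIntegral.integral_congr_ae <| by
    filter_upwards [ae_sin_ne_zero] with x hx _ using h x hx

lemma sin_int_mul_div_sin (n : ℤ) {x : ℝ} (hx : sin x ≠ 0) :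
    sin (n * x) / sin x = (U ℝ (n - 1)).eval (cos x) := by
  rw [div_eq_iff hx, U_real_cos]
  push_cast
  ring_nf

lemma continuous_eval_U_cos (n : ℤ) : Continuous fun x : ℝ => (U ℝ n).eval (cos x) :=
  (U ℝ n).continuous.comp continuous_cos

lemma intervalIntegrable_sin_int_mul_div_sin (n : ℤ) (a b : ℝ) :
    IntervalIntegrable (fun x => sin (n * x) / sin x) volume a b := by
  refine ((continuous_eval_U_cos (n - 1)).intervalIntegrable a b).congr_ae ?_
  filter_upwards [ae_restrict_of_ae ae_sin_ne_zero] with x hx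
  exact (sin_int_mul_div_sin n hx).symm

lemma intervalIntegrable_sin_int_mul_mul_sin_int_mul_div_sin_sq (n m : ℤ) (a b : ℝ) :
    IntervalIntegrable (fun x => sin (n * x) * sin (m * x) / sin x ^ 2) volume a b := by
  refine (((continuous_eval_U_cos (n - 1)).mul
    (continuous_eval_U_cos (m - 1))).intervalIntegrable a b).congr_ae ?_
  filter_upwards [ae_restrict_of_ae ae_sin_ne_zero] with x hx
  rw [Pi.mul_apply, ← sin_int_mul_div_sin n hx, ← sin_int_mul_div_sin m hx, div_mul_div_comm, ← sq]

lemma sin_add_mul_sin_add_sub_sin_mul_sin (a b x : ℝ) :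
    sin (a + x) * sin (b + x) - sin a * sin b = sin (a + b + x) * sin x := by
  simp only [sin_add, cos_add]
  linear_combination sin a * sin b * sin_sq_add_cos_sq x

lemma integral_cos_int_mul {j : ℤ} (hj : j ≠ 0) : ∫ x in (0:ℝ)..π, cos (j * x) = 0 := by
  rw [intervalIntegral.integral_comp_mul_left cos (by exact_mod_cast hj), integral_cos]
  simp [sin_int_mul_pi]

lemma integral_sin_odd_mul_div_sin (k : ℕ) :
    ∫ x in (0:ℝ)..π, sin ((2 * k + 1) * x) / sin x = π := by
  induction k with
  | zero =>
    rw [integral_congr_of_sin_ne_zero (g := fun _ => 1) fun x hx => by simpa using div_self hx]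
    simp
  | succ k ih =>
    have hstep : ∀ x, sin x ≠ 0 → sin ((2 * ↑(k + 1) + 1) * x) / sin x
        = sin ((2 * k + 1) * x) / sin x + 2 * cos (((2 * k + 2 : ℤ) : ℝ) * x) := by
      intro x hx
      rw [div_add' _ _ _ hx, div_left_inj' hx, ← sub_eq_iff_eq_add', sin_sub_sin]
      push_cast
      ring_nf
    have hint : IntervalIntegrable (fun x => sin ((2 * k + 1) * x) / sin x) volume 0 π := by
      simpa using intervalIntegrable_sin_int_mul_div_sin (2 * k + 1) 0 π
    have hcos : Continuous fun x : ℝ => 2 * cos (((2 * k + 2 : ℤ) : ℝ) * x) := by fun_prop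
    rw [integral_congr_of_sin_ne_zero hstep,
      intervalIntegral.integral_add hint (hcos.intervalIntegrable 0 π), ih, intervalIntegral.integral_const_mul,
      integral_cos_int_mul (by omega), mul_zero, add_zero]

lemma integral_sin_mul_sin_add_two_mul_div_sin_sq (a d : ℕ) :
    ∫ x in (0:ℝ)..π, sin (a * x) * sin ((a + 2 * d) * x) / sin x ^ 2 = a * π := by
  induction a with
  | zero => simp
  | succ a ih =>
    have hstep : ∀ x, sin x ≠ 0 → sin (↑(a + 1) * x) * sin ((↑(a + 1) + 2 * d) * x) / sin x ^ 2
        = sin (a * x) * sin ((a + 2 * d) * x) / sin x ^ 2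
          + sin ((2 * ↑(a + d) + 1) * x) / sin x := by
      intro x hx
      have hsum : sin (↑(a + 1) * x) * sin ((↑(a + 1) + 2 * d) * x)
          = sin (a * x) * sin ((a + 2 * d) * x) + sin ((2 * ↑(a + d) + 1) * x) * sin x := by
        have h := sin_add_mul_sin_add_sub_sin_mul_sin (a * x) ((a + 2 * d) * x) x
        push_cast
        ring_nf at h ⊢
        linear_combination h
      rw [hsum, add_div, sq, mul_div_mul_right _ _ hx]
    have hint : IntervalIntegrable
        (fun x => sin (a * x) * sin ((a + 2 * d) * x) / sin x ^ 2) volume 0 π := by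
      simpa using intervalIntegrable_sin_int_mul_mul_sin_int_mul_div_sin_sq a (a + 2 * d) 0 π
    have hint' : IntervalIntegrable
        (fun x => sin ((2 * ↑(a + d) + 1) * x) / sin x) volume 0 π := by
      simpa using intervalIntegrable_sin_int_mul_div_sin (2 * ↑(a + d) + 1) 0 π
    rw [integral_congr_of_sin_ne_zero hstep, intervalIntegral.integral_add hint hint', ih,
      integral_sin_odd_mul_div_sin]
    push_cast
    ring

lemma integral_sin_nat_mul_mul_sin_nat_mul_div_sin_sq {a b : ℕ} (hab : Even (a + b)) :
    ∫ x in (0:ℝ)..π, sin (a * x) * sin (b * x) / sin x ^ 2 = min a b * π := by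
  wlog h : a ≤ b generalizing a b
  · rw [min_comm, ← this (by rwa [add_comm]) (by omega)]
    simp only [mul_comm (sin (a * _))]
  obtain ⟨d, rfl⟩ : ∃ d, b = a + 2 * d := ⟨(b - a) / 2, by grind⟩
  simpa [h] using integral_sin_mul_sin_add_two_mul_div_sin_sq a d

lemma sin_int_mul_eq_sign_mul (n : ℤ) (x : ℝ) : sin (n * x) = n.sign * sin (n.natAbs * x) := by
  conv_lhs => rw [← Int.sign_mul_natAbs n]
  rcases Int.sign_trichotomy n with h | h | h <;> simp [h, neg_mul]

lemma integral_sin_int_mul_mul_sin_int_mul_div_sin_sq_of_even {n m : ℤ} (h : Even (n + m)) :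
    ∫ x in (0:ℝ)..π, sin (n * x) * sin (m * x) / sin x ^ 2
      = n.sign * m.sign * ((min |n| |m| : ℤ) : ℝ) * π := by
  have hnat : Even (n.natAbs + m.natAbs) := by
    rw [Nat.even_add, Int.natAbs_even, Int.natAbs_even]
    exact Int.even_add.mp h
  have hmin : ((min |n| |m| : ℤ) : ℝ) = (min n.natAbs m.natAbs : ℕ) := by
    simp [Nat.cast_natAbs]
  calc ∫ x in (0:ℝ)..π, sin (n * x) * sin (m * x) / sin x ^ 2
      = n.sign * m.sign * ∫ x in (0:ℝ)..π,
          sin (n.natAbs * x) * sin (m.natAbs * x) / sin x ^ 2 := by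
        rw [← intervalIntegral.integral_const_mul]
        congr with x
        rw [sin_int_mul_eq_sign_mul n, sin_int_mul_eq_sign_mul m]
        ring
    _ = n.sign * m.sign * ((min |n| |m| : ℤ) : ℝ) * π := by
        rw [integral_sin_nat_mul_mul_sin_nat_mul_div_sin_sq hnat, hmin]
        ring

lemma intervalIntegral.integral_eq_zero_of_comp_add_sub_eq_neg {E : Type*} [NormedAddCommGroup E]
    [NormedSpace ℝ E] {f : ℝ → E} {a b : ℝ} (h : ∀ x, f (a + b - x) = -f x) :
    ∫ x in a..b, f x = 0 := by
  have hcomp := intervalIntegral.integral_comp_sub_left f (a + b) (a := a) (b := b)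
  simp only [h, intervalIntegral.integral_neg, add_sub_cancel_right, add_sub_cancel_left] at hcomp
  have htwice : (2 : ℝ) • ∫ x in a..b, f x = 0 := by
    rw [two_smul]
    nth_rw 1 [← hcomp]
    exact neg_add_cancel _
  exact (smul_eq_zero.mp htwice).resolve_left two_ne_zero

lemma integral_sin_int_mul_mul_sin_int_mul_div_sin_sq_of_odd {n m : ℤ} (h : Odd (n + m)) :
    ∫ x in (0:ℝ)..π, sin (n * x) * sin (m * x) / sin x ^ 2 = 0 := by
  have hsin : ∀ (k : ℤ) (x : ℝ), sin (k * (π - x)) = -((-1) ^ k * sin (k * x)) := fun k x => by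
    rw [mul_sub, sin_int_mul_pi_sub]
  apply intervalIntegral.integral_eq_zero_of_comp_add_sub_eq_neg
  intro x
  rw [zero_add, hsin, hsin, sin_pi_sub]
  have hsign : ((-1 : ℝ) ^ n) * (-1) ^ m = -1 := by
    rw [← zpow_add₀ (by norm_num), h.neg_one_zpow]
  linear_combination (sin (n * x) * sin (m * x) / sin x ^ 2) * hsign

theorem projection_integral (n m : ℤ) :
    (2 / π) * ∫ x in (0:ℝ)..π,
        Real.sin (n * x) * Real.sin (m * x) / (Real.sin x) ^ 2
      = if Even (n + m) then
          2 * (n.sign : ℝ) * (m.sign : ℝ) * ((min |n| |m| : ℤ) : ℝ)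
        else 0 := by
  split_ifs with hpar
  · rw [integral_sin_int_mul_mul_sin_int_mul_div_sin_sq_of_even hpar]
    field_simp
  · rw [integral_sin_int_mul_mul_sin_int_mul_div_sin_sq_of_odd (Int.not_even_iff_odd.mp hpar),
      mul_zero]
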